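/- (Analogue of Nielsen's theorem) For standard states |ψ_θ⟩ = (1/√2)(e^{iθ/2}|0⟩+e^{−iθ/2}|1⟩) and |ψ_γ⟩ with θ, γ ∈ [0,π/2], there exists a finite set of real 2×2 Kraus operators {K_k} with Σ_k K_k†K_k = I and real orthogonal matrices {O_k} such that K_k|ψ_θ⟩ is proportional to O_k|ψ_γ⟩ for all k, if and only if γ ≤ θ. -/

import Mathlib

/-!
For a real matrix `M`, both `(M v) ⬝ᵥ (M v)` and `star (M v) ⬝ᵥ (M v)` only depend on `Mᵀ M`,
so a family of real Kraus operators preserves both `∑ ‖K_k ψ‖²` and the bilinear quantity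
`∑ (K_k ψ) ⬝ᵥ (K_k ψ)`; for `ψ_θ` these are `1` and `cos θ`. If every branch is `c_k O_k ψ_γ`
with `O_k` orthogonal, then `cos θ = (∑ c_k²) cos γ` with `∑ |c_k|² = 1`, so `|cos θ| ≤ |cos γ|`.
Conversely `ψ_θ = cos (θ/2) |+⟩ + i sin (θ/2) |−⟩`, and two real Kraus operators diagonal in the
basis `|±⟩` rescale these two components so as to produce `ψ_γ` on one branch and, up to a phase,
`Z ψ_γ` on the other.
-/

open Complex Matrix

/-- The standard state `|ψ_θ⟩ = (1/√2)(e^{iθ/2}|0⟩ + e^{-iθ/2}|1⟩)`. -/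
noncomputable def stdState (θ : ℝ) : Fin 2 → ℂ := fun i =>
  if i = 0 then Complex.exp (Complex.I * (θ : ℂ) / 2) / (Real.sqrt 2 : ℂ)
  else Complex.exp (-(Complex.I * (θ : ℂ)) / 2) / (Real.sqrt 2 : ℂ)

section KrausIdentities

variable {n ι R : Type*} [Fintype n] [Fintype ι] [CommSemiring R]

theorem mulVec_dotProduct_mulVec_self (A : Matrix n n R) (v : n → R) :
    (A *ᵥ v) ⬝ᵥ (A *ᵥ v) = v ⬝ᵥ ((Aᵀ * A) *ᵥ v) := by
  rw [dotProduct_mulVec, ← mulVec_transpose, dotProduct_comm, mulVec_mulVec]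

theorem star_mulVec_dotProduct_mulVec_self [StarRing R] (A : Matrix n n R) (v : n → R) :
    star (A *ᵥ v) ⬝ᵥ (A *ᵥ v) = star v ⬝ᵥ ((Aᴴ * A) *ᵥ v) := by
  rw [star_mulVec, ← dotProduct_mulVec, mulVec_mulVec]

variable [DecidableEq n]

theorem sum_mulVec_dotProduct_mulVec_self {K : ι → Matrix n n R}
    (hK : ∑ k, (K k)ᵀ * K k = 1) (v : n → R) :
    ∑ k, (K k *ᵥ v) ⬝ᵥ (K k *ᵥ v) = v ⬝ᵥ v := by
  simp_rw [mulVec_dotProduct_mulVec_self, ← dotProduct_sum, ← sum_mulVec, hK, one_mulVec]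

theorem sum_star_mulVec_dotProduct_mulVec_self [StarRing R] {K : ι → Matrix n n R}
    (hK : ∑ k, (K k)ᴴ * K k = 1) (v : n → R) :
    ∑ k, star (K k *ᵥ v) ⬝ᵥ (K k *ᵥ v) = star v ⬝ᵥ v := by
  simp_rw [star_mulVec_dotProduct_mulVec_self, ← dotProduct_sum, ← sum_mulVec, hK, one_mulVec]

end KrausIdentities

theorem conjTranspose_map_ofReal {m n : Type*} (M : Matrix m n ℝ) :
    (M.map ofReal)ᴴ = (M.map ofReal)ᵀ := by
  rw [← conjTranspose_map _ (fun _ => (conj_ofReal _).symm), conjTranspose_eq_transpose_of_trivial,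
    transpose_map]

theorem transpose_map_ofReal_mul_map_ofReal {m n : Type*} [Fintype m] (M : Matrix m n ℝ) :
    (M.map ofReal)ᵀ * M.map ofReal = (Mᵀ * M).map ofReal := by
  rw [← transpose_map]
  exact (Matrix.map_mul (f := ofRealHom)).symm

theorem smul_dotProduct_smul {n : Type*} [Fintype n] (c : ℂ) (v : n → ℂ) :
    (c • v) ⬝ᵥ (c • v) = c ^ 2 * (v ⬝ᵥ v) := by
  rw [smul_dotProduct, dotProduct_smul, smul_smul, smul_eq_mul, sq]

theorem star_smul_dotProduct_smul {n : Type*} [Fintype n] (c : ℂ) (v : n → ℂ) :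
    star (c • v) ⬝ᵥ (c • v) = (‖c‖ ^ 2 : ℝ) * (star v ⬝ᵥ v) := by
  rw [star_smul, smul_dotProduct, dotProduct_smul, smul_smul, smul_eq_mul, ofReal_pow,
    ← conj_mul', Complex.star_def]

section Convertible

variable {n : Type*} [Fintype n] [DecidableEq n]

theorem sum_transpose_map_ofReal_mul_map_ofReal {ι : Type*} [Fintype ι] {K : ι → Matrix n n ℝ}
    (hK : ∑ k, (K k)ᵀ * K k = 1) : ∑ k, ((K k).map ofReal)ᵀ * (K k).map ofReal = 1 := by
  simp_rw [transpose_map_ofReal_mul_map_ofReal]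
  rw [← Matrix.map_one _ ofReal_zero ofReal_one, ← hK]
  exact (map_sum (ofRealHom.mapMatrix (m := n)) _ _).symm

def TRIOConvertible (ψ φ : n → ℂ) : Prop :=
  ∃ (N : ℕ) (K : Fin N → Matrix n n ℝ) (O : Fin N → Matrix n n ℝ),
    (∑ k, (K k)ᵀ * K k = 1) ∧ (∀ k, (O k)ᵀ * O k = 1) ∧
    (∀ k, ∃ c : ℂ, (K k).map ofReal *ᵥ ψ = c • (O k).map ofReal *ᵥ φ)

theorem TRIOConvertible.refl (ψ : n → ℂ) : TRIOConvertible ψ ψ :=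
  ⟨1, fun _ => 1, fun _ => 1, by simp, fun _ => by simp, fun _ => ⟨1, by simp⟩⟩

theorem TRIOConvertible.norm_dotProduct_self_le {ψ φ : n → ℂ} (h : TRIOConvertible ψ φ)
    (hψ : star ψ ⬝ᵥ ψ = 1) (hφ : star φ ⬝ᵥ φ = 1) : ‖ψ ⬝ᵥ ψ‖ ≤ ‖φ ⬝ᵥ φ‖ := by
  obtain ⟨N, K, O, hK, hO, hbranch⟩ := h
  choose c hc using hbranch
  have hKc := sum_transpose_map_ofReal_mul_map_ofReal hK
  have hOc (k : Fin N) : ((O k).map ofReal)ᵀ * (O k).map ofReal = 1 := by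
    rw [transpose_map_ofReal_mul_map_ofReal, hO k, Matrix.map_one _ ofReal_zero ofReal_one]
  have hbil : ψ ⬝ᵥ ψ = (∑ k, c k ^ 2) * (φ ⬝ᵥ φ) := by
    rw [← sum_mulVec_dotProduct_mulVec_self hKc, Finset.sum_mul]
    refine Finset.sum_congr rfl fun k _ => ?_
    rw [hc, smul_dotProduct_smul, mulVec_dotProduct_mulVec_self, hOc, one_mulVec]
  have hprob : ∑ k, ‖c k‖ ^ 2 = 1 := by
    have hKc' : ∑ k, ((K k).map ofReal)ᴴ * (K k).map ofReal = 1 := by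
      simpa only [conjTranspose_map_ofReal] using hKc
    have := sum_star_mulVec_dotProduct_mulVec_self hKc' ψ
    simp_rw [hc, star_smul_dotProduct_smul, star_mulVec_dotProduct_mulVec_self,
      conjTranspose_map_ofReal, hOc, one_mulVec, hφ, hψ, mul_one, ← ofReal_sum] at this
    exact_mod_cast this
  calc ‖ψ ⬝ᵥ ψ‖ = ‖∑ k, c k ^ 2‖ * ‖φ ⬝ᵥ φ‖ := by rw [hbil, norm_mul]
    _ ≤ (∑ k, ‖c k‖ ^ 2) * ‖φ ⬝ᵥ φ‖ := by
      gcongr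
      exact (norm_sum_le _ _).trans_eq (by simp_rw [norm_pow])
    _ = ‖φ ⬝ᵥ φ‖ := by rw [hprob, one_mul]

end Convertible

theorem stdState_apply_zero (θ : ℝ) :
    stdState θ 0 = (Real.cos (θ / 2) + Real.sin (θ / 2) * I) / Real.sqrt 2 := by
  rw [stdState, if_pos rfl, show I * θ / 2 = ((θ / 2 : ℝ) : ℂ) * I by push_cast; ring,
    exp_mul_I, ← ofReal_cos, ← ofReal_sin]

theorem stdState_apply_one (θ : ℝ) :
    stdState θ 1 = (Real.cos (θ / 2) - Real.sin (θ / 2) * I) / Real.sqrt 2 := by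
  rw [stdState, if_neg one_ne_zero, show -(I * θ) / 2 = ((-(θ / 2) : ℝ) : ℂ) * I by push_cast; ring,
    exp_mul_I, ← ofReal_cos, ← ofReal_sin, Real.cos_neg, Real.sin_neg, ofReal_neg]
  ring

theorem ofReal_sqrt_two_sq : ((Real.sqrt 2 : ℝ) : ℂ) ^ 2 = 2 := by
  rw [← ofReal_pow, Real.sq_sqrt zero_le_two, ofReal_ofNat]

theorem stdState_dotProduct_self (θ : ℝ) : stdState θ ⬝ᵥ stdState θ = Real.cos θ := by
  have hcos : (Real.cos θ : ℂ) = Real.cos (θ / 2) ^ 2 - Real.sin (θ / 2) ^ 2 := by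
    have h := Real.cos_two_mul' (θ / 2)
    rw [mul_div_cancel₀ θ two_ne_zero] at h
    exact_mod_cast h
  simp only [dotProduct, Fin.sum_univ_two, stdState_apply_zero, stdState_apply_one]
  field_simp
  rw [ofReal_sqrt_two_sq, hcos]
  linear_combination (2 * (Real.sin (θ / 2) : ℂ) ^ 2) * I_sq

theorem star_stdState_dotProduct_self (θ : ℝ) : star (stdState θ) ⬝ᵥ stdState θ = 1 := by
  have hpyth : (Real.cos (θ / 2) : ℂ) ^ 2 + Real.sin (θ / 2) ^ 2 = 1 := by
    exact_mod_cast Real.cos_sq_add_sin_sq (θ / 2)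
  simp only [dotProduct, Fin.sum_univ_two, Pi.star_apply, stdState_apply_zero, stdState_apply_one,
    Complex.star_def, map_div₀, map_add, map_sub, map_mul, conj_ofReal, conj_I]
  field_simp
  rw [ofReal_sqrt_two_sq]
  linear_combination (-2 * (Real.sin (θ / 2) : ℂ) ^ 2) * I_sq + 2 * hpyth

theorem TRIOConvertible.abs_cos_le {θ γ : ℝ} (h : TRIOConvertible (stdState θ) (stdState γ)) :
    |Real.cos θ| ≤ |Real.cos γ| := by
  simpa only [stdState_dotProduct_self, norm_real, Real.norm_eq_abs] using
    h.norm_dotProduct_self_le (star_stdState_dotProduct_self θ) (star_stdState_dotProduct_self γ)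

/-- `p |+⟩⟨+| + q |−⟩⟨−|` for `|±⟩ = (|0⟩ ± |1⟩) / √2`. -/
noncomputable def plusMinus (p q : ℝ) : Matrix (Fin 2) (Fin 2) ℝ :=
  !![(p + q) / 2, (p - q) / 2; (p - q) / 2, (p + q) / 2]

theorem plusMinus_transpose (p q : ℝ) : (plusMinus p q)ᵀ = plusMinus p q := by
  ext i j; fin_cases i <;> fin_cases j <;> rfl

theorem plusMinus_mul_plusMinus (p q p' q' : ℝ) :
    plusMinus p q * plusMinus p' q' = plusMinus (p * p') (q * q') := by
  rw [plusMinus, plusMinus, plusMinus, mul_fin_two]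
  ring_nf

theorem plusMinus_add_plusMinus (p q p' q' : ℝ) :
    plusMinus p q + plusMinus p' q' = plusMinus (p + p') (q + q') := by
  simp only [plusMinus, of_add_of, vec2_add]
  ring_nf

theorem plusMinus_one_one : plusMinus 1 1 = 1 := by
  rw [plusMinus, one_fin_two]; norm_num

theorem plusMinus_mulVec_stdState {p q c θ δ : ℝ}
    (hp : p * Real.cos (θ / 2) = c * Real.cos (δ / 2))
    (hq : q * Real.sin (θ / 2) = c * Real.sin (δ / 2)) :
    (plusMinus p q).map ofReal *ᵥ stdState θ = (c : ℂ) • stdState δ := by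
  have hp' : (p : ℂ) * cos (θ / 2) = c * cos (δ / 2) := by exact_mod_cast hp
  have hq' : (q : ℂ) * sin (θ / 2) = c * sin (δ / 2) := by exact_mod_cast hq
  ext i
  fin_cases i
  all_goals
    simp only [plusMinus, mulVec, vec2_dotProduct, map_apply, of_apply, Pi.smul_apply, smul_eq_mul,
      Fin.zero_eta, Fin.mk_one, cons_val_zero, cons_val_one, cons_val_fin_one,
      stdState_apply_zero, stdState_apply_one]
    push_cast
    field_simp
  · linear_combination 2 * hp' + 2 * I * hq'
  · linear_combination 2 * hp' - 2 * I * hq'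

def pauliZ : Matrix (Fin 2) (Fin 2) ℝ := !![1, 0; 0, -1]

theorem pauliZ_transpose_mul_self : pauliZᵀ * pauliZ = 1 := by
  ext i j; fin_cases i <;> fin_cases j <;> simp [pauliZ, mul_apply, Fin.sum_univ_two]

theorem pauliZ_mulVec_stdState (γ : ℝ) :
    pauliZ.map ofReal *ᵥ stdState γ = I • stdState (γ - Real.pi) := by
  have hcos : Real.cos ((γ - Real.pi) / 2) = Real.sin (γ / 2) := by
    rw [sub_div, Real.cos_sub_pi_div_two]
  have hsin : Real.sin ((γ - Real.pi) / 2) = -Real.cos (γ / 2) := by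
    rw [sub_div, Real.sin_sub_pi_div_two]
  ext i
  fin_cases i
  all_goals
    simp only [pauliZ, mulVec, vec2_dotProduct, map_apply, of_apply, Pi.smul_apply, smul_eq_mul,
      Fin.zero_eta, Fin.mk_one, cons_val_zero, cons_val_one, cons_val_fin_one,
      stdState_apply_zero, stdState_apply_one, hcos, hsin]
    push_cast
    field_simp
  · linear_combination cos ((γ : ℂ) / 2) * I_sq
  · linear_combination -cos ((γ : ℂ) / 2) * I_sq

theorem cos_half_sq (x : ℝ) : Real.cos (x / 2) ^ 2 = (1 + Real.cos x) / 2 := by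
  rw [Real.cos_sq, mul_div_cancel₀ x two_ne_zero]; ring

theorem sin_half_sq (x : ℝ) : Real.sin (x / 2) ^ 2 = (1 - Real.cos x) / 2 := by
  rw [Real.sin_sq, cos_half_sq]; ring

theorem transpose_plusMinus_mul_add (x y u v : ℝ) :
    (plusMinus x y)ᵀ * plusMinus x y + (plusMinus u v)ᵀ * plusMinus u v
      = plusMinus (x ^ 2 + u ^ 2) (y ^ 2 + v ^ 2) := by
  simp only [plusMinus_transpose, plusMinus_mul_plusMinus, plusMinus_add_plusMinus, sq]

/-- The branch weights `c₀² = (1 + r) / 2` and `c₁² = (1 - r) / 2` are forced: on the `|+⟩` and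
`|−⟩` components they must reproduce `cos² (θ/2)` and `sin² (θ/2)`, i.e. sum to `1` and satisfy
`(c₀² - c₁²) cos γ = cos θ`. -/
theorem trioConvertible_stdState_of_mul_cos_eq {θ γ r : ℝ} (hθ : Real.sin θ ≠ 0) (hr : |r| ≤ 1)
    (hrγ : r * Real.cos γ = Real.cos θ) : TRIOConvertible (stdState θ) (stdState γ) := by
  have hsin2 := Real.sin_two_mul (θ / 2)
  rw [mul_div_cancel₀ θ two_ne_zero] at hsin2
  have ha : Real.cos (θ / 2) ≠ 0 := fun h => hθ (by rw [hsin2, h, mul_zero])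
  have hb : Real.sin (θ / 2) ≠ 0 := fun h => hθ (by rw [hsin2, h, mul_zero, zero_mul])
  obtain ⟨hr₁, hr₂⟩ := abs_le.mp hr
  set c₀ := Real.sqrt ((1 + r) / 2)
  set c₁ := Real.sqrt ((1 - r) / 2)
  have hc₀ : c₀ ^ 2 = (1 + r) / 2 := Real.sq_sqrt (by linarith)
  have hc₁ : c₁ ^ 2 = (1 - r) / 2 := Real.sq_sqrt (by linarith)
  set x := c₀ * Real.cos (γ / 2) / Real.cos (θ / 2) with hx
  set y := c₀ * Real.sin (γ / 2) / Real.sin (θ / 2) with hy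
  set u := c₁ * Real.sin (γ / 2) / Real.cos (θ / 2) with hu
  set w := c₁ * Real.cos (γ / 2) / Real.sin (θ / 2) with hw
  refine ⟨2, ![plusMinus x y, plusMinus u (-w)], ![1, pauliZ], ?_, ?_, ?_⟩
  · have hxu : x ^ 2 + u ^ 2 = 1 := by
      rw [hx, hu]
      field_simp
      rw [hc₀, hc₁, cos_half_sq, sin_half_sq, cos_half_sq]
      linear_combination hrγ / 2
    have hyw : y ^ 2 + (-w) ^ 2 = 1 := by
      rw [hy, hw]
      field_simp
      rw [hc₀, hc₁, cos_half_sq, sin_half_sq, sin_half_sq]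
      linear_combination -hrγ / 2
    rw [Fin.sum_univ_two]
    simp only [cons_val_zero, cons_val_one]
    rw [transpose_plusMinus_mul_add, hxu, hyw, plusMinus_one_one]
  · exact Fin.forall_fin_two.mpr ⟨by simp, pauliZ_transpose_mul_self⟩
  · refine Fin.forall_fin_two.mpr ⟨⟨c₀, ?_⟩, ⟨-I * c₁, ?_⟩⟩
    · simp only [cons_val_zero, Matrix.map_one _ ofReal_zero ofReal_one, one_mulVec]
      exact plusMinus_mulVec_stdState (by rw [hx]; field_simp) (by rw [hy]; field_simp)
    · simp only [cons_val_one, cons_val_zero]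
      rw [pauliZ_mulVec_stdState, smul_smul,
        show -I * c₁ * I = c₁ by linear_combination (-(c₁ : ℂ)) * I_sq]
      refine plusMinus_mulVec_stdState ?_ ?_
      · rw [hu, sub_div, Real.cos_sub_pi_div_two]; field_simp
      · rw [hw, sub_div, Real.sin_sub_pi_div_two]; field_simp

theorem exists_mul_eq_of_abs_le_abs {x y : ℝ} (h : |x| ≤ |y|) : ∃ r, |r| ≤ 1 ∧ r * y = x := by
  rcases eq_or_ne y 0 with rfl | hy
  · exact ⟨0, by simp, by simpa [eq_comm] using h⟩
  · refine ⟨x / y, ?_, div_mul_cancel₀ x hy⟩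
    rw [abs_div]
    exact div_le_one_of_le₀ h (abs_nonneg y)

theorem trioConvertible_stdState_of_abs_cos_le {θ γ : ℝ} (hθ : Real.sin θ ≠ 0)
    (h : |Real.cos θ| ≤ |Real.cos γ|) : TRIOConvertible (stdState θ) (stdState γ) :=
  let ⟨_, hr, hrγ⟩ := exists_mul_eq_of_abs_le_abs h
  trioConvertible_stdState_of_mul_cos_eq hθ hr hrγ

/-- analogue of Nielsen's theorem: for `θ, γ ∈ [0, π/2]` there exists a
TRIO measurement (real Kraus operators `K_k` with `Σ_k K_k†K_k = 1`) together with
real orthogonal corrections `O_k` such that each branch `K_k|ψ_θ⟩` is proportional to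
`O_k|ψ_γ⟩`, if and only if `γ ≤ θ`. -/
theorem nielsen_analogue
    (θ γ : ℝ) (hθ : θ ∈ Set.Icc 0 (Real.pi / 2)) (hγ : γ ∈ Set.Icc 0 (Real.pi / 2)) :
    (∃ (N : ℕ) (K : Fin N → Matrix (Fin 2) (Fin 2) ℝ) (O : Fin N → Matrix (Fin 2) (Fin 2) ℝ),
        (∑ k, (K k)ᵀ * K k = 1) ∧ (∀ k, (O k)ᵀ * O k = 1) ∧
        (∀ k, ∃ c : ℂ, ((K k).map Complex.ofReal).mulVec (stdState θ)
            = c • ((O k).map Complex.ofReal).mulVec (stdState γ)))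
      ↔ γ ≤ θ := by
  have hIcc : Set.Icc 0 (Real.pi / 2) ⊆ Set.Icc 0 Real.pi :=
    Set.Icc_subset_Icc_right (by linarith [Real.pi_pos])
  have hcos_le_iff : |Real.cos θ| ≤ |Real.cos γ| ↔ γ ≤ θ := by
    rw [abs_of_nonneg (Real.cos_nonneg_of_mem_Icc ⟨by linarith [hθ.1, Real.pi_pos], hθ.2⟩),
      abs_of_nonneg (Real.cos_nonneg_of_mem_Icc ⟨by linarith [hγ.1, Real.pi_pos], hγ.2⟩)]
    exact Real.strictAntiOn_cos.le_iff_ge (hIcc hθ) (hIcc hγ)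
  refine ⟨fun h => hcos_le_iff.mp (TRIOConvertible.abs_cos_le h), fun hle => ?_⟩
  rcases hle.eq_or_lt with rfl | hlt
  · exact TRIOConvertible.refl _
  · have hsin : Real.sin θ ≠ 0 :=
      (Real.sin_pos_of_pos_of_lt_pi (hγ.1.trans_lt hlt) (by linarith [hθ.2, Real.pi_pos])).ne'
    exact trioConvertible_stdState_of_abs_cos_le hsin (hcos_le_iff.mpr hle)
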